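/- arXiv:2304.14144 — 6 statements merged into one kernel-verified Lean document; each statement's English description precedes it below -/
import Mathlib

section
/- For all n ≥ l + k, the matrices E_π, as π ranges over all set partitions of [l+k], are linearly independent in Hom((ℝⁿ)^{⊗k}, (ℝⁿ)^{⊗l}). -/
open scoped Classical

/-- The matrix `E_π` associated to a set partition `π` of the `l` output positions and
`k` input positions. -/
noncomputable def Emat (n l k : ℕ) (π : Setoid (Fin l ⊕ Fin k)) :
    Matrix (Fin l → Fin n) (Fin k → Fin n) ℝ :=
  Matrix.of fun I J =>
    if ∀ x y, π.r x y → Sum.elim I J x = Sum.elim I J y then 1 else 0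

/-!
A map `f : Fin l ⊕ Fin k → Fin n` determines an entry `(f ∘ Sum.inl, f ∘ Sum.inr)`, at which
`E_π` equals `1` if `π ≤ ker f` and `0` otherwise. Since `n ≥ l + k`, every partition `σ` is the
kernel of some `f`, so evaluating at these entries turns the family `E_π` into the zeta matrix
of the partition lattice, which is unitriangular; hence the `E_π` are linearly independent.
-/

instance Setoid.instFinite {α : Type*} [Finite α] : Finite (Setoid α) :=
  Finite.of_injective (fun s : Setoid α => ⇑s) fun _ _ h =>
    Setoid.ext fun a b => iff_of_eq (congrFun₂ h a b)

theorem linearIndependent_of_triangular {ι R M : Type*} [PartialOrder ι] [WellFoundedLT ι]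
    [Ring R] [NoZeroDivisors R] [AddCommGroup M] [Module R M] (v : ι → M) (φ : ι → M →ₗ[R] R)
    (hdiag : ∀ i, φ i (v i) ≠ 0) (htri : ∀ i j, φ i (v j) ≠ 0 → j ≤ i) :
    LinearIndependent R v := by
  rw [linearIndependent_iff']
  intro s g hsum i
  induction i using WellFoundedLT.induction with
  | ind i ih =>
    intro hi
    have hφ : ∑ j ∈ s, g j * φ i (v j) = 0 := by
      simpa using congrArg (φ i) hsum
    rw [Finset.sum_eq_single_of_mem i hi fun j hj hji => ?_] at hφ
    · exact (mul_eq_zero.mp hφ).resolve_right (hdiag i)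
    · by_cases hij : φ i (v j) = 0
      · rw [hij, mul_zero]
      · rw [ih j (lt_of_le_of_ne (htri i j hij) hji) hj, zero_mul]

theorem Setoid.exists_ker_eq_of_card_le {α β : Type*} [Fintype α] [Fintype β] (σ : Setoid α)
    (h : Fintype.card α ≤ Fintype.card β) : ∃ f : α → β, Setoid.ker f = σ := by
  have : Fintype (Quotient σ) := Fintype.ofFinite _
  obtain ⟨e⟩ := Function.Embedding.nonempty_of_card_le <|
    (Fintype.card_le_of_surjective (Quotient.mk σ) Quotient.mk_surjective).trans h
  refine ⟨e ∘ Quotient.mk σ, Setoid.ext fun x y => ?_⟩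
  rw [Setoid.ker_def, Function.comp_apply, Function.comp_apply, e.injective.eq_iff, Quotient.eq]

theorem Emat_comp_inl_comp_inr (n l k : ℕ) (π : Setoid (Fin l ⊕ Fin k))
    (f : Fin l ⊕ Fin k → Fin n) :
    Emat n l k π (f ∘ Sum.inl) (f ∘ Sum.inr) = if π ≤ Setoid.ker f then 1 else 0 := by
  simp only [Emat, Matrix.of_apply, Sum.elim_comp_inl_inr, Setoid.le_def, Setoid.ker_def]

/-- For all `n ≥ l + k`, the matrices `E_π`, as `π` ranges over all set partitions of
`[l+k]`, are linearly independent. -/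
theorem Emat_linearIndependent (n l k : ℕ) (hn : l + k ≤ n) :
    LinearIndependent ℝ (fun π : Setoid (Fin l ⊕ Fin k) => Emat n l k π) := by
  choose f hf using fun σ : Setoid (Fin l ⊕ Fin k) =>
    Setoid.exists_ker_eq_of_card_le (β := Fin n) σ (by simpa using hn)
  refine linearIndependent_of_triangular _
    (fun σ => Matrix.entryLinearMap ℝ ℝ (f σ ∘ Sum.inl) (f σ ∘ Sum.inr)) (fun π => ?_)
    (fun σ π hπσ => ?_)
  · simp [Emat_comp_inl_comp_inr, hf]
  · by_contra h
    simp [Emat_comp_inl_comp_inr, hf, h] at hπσ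
end

section
/- The dimension of the space of Sₙ-equivariant linear maps from (ℝⁿ)^{⊗k} to (ℝⁿ)^{⊗l} equals Σ_{t=1}^{n} S(l+k, t), the number of set partitions of [l+k] into at most n blocks, for l+k ≥ 1. -/
open scoped Classical

/-- The Stirling numbers of the second kind, via the standard recurrence. -/
def stirlingSecond : ℕ → ℕ → ℕ
  | 0, 0 => 1
  | 0, _ + 1 => 0
  | _ + 1, 0 => 0
  | m + 1, t + 1 => (t + 1) * stirlingSecond m (t + 1) + stirlingSecond m t

/-- The matrix of the diagonal action of a permutation `g ∈ Sₙ` on the `k`-th tensor power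
of `ℝⁿ`, in the basis of standard basis tensors indexed by tuples. -/
noncomputable def permMat (n k : ℕ) (g : Equiv.Perm (Fin n)) :
    Matrix (Fin k → Fin n) (Fin k → Fin n) ℝ :=
  Matrix.of fun I J => if I = g ∘ J then 1 else 0

/-- The space `Hom_{Sₙ}((ℝⁿ)^{⊗k}, (ℝⁿ)^{⊗l})` of `Sₙ`-equivariant linear maps,
realised as a submodule of the space of matrices indexed by tuples. -/
noncomputable def equivariantSubmodule (n l k : ℕ) :
    Submodule ℝ (Matrix (Fin l → Fin n) (Fin k → Fin n) ℝ) where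
  carrier := {M | ∀ g : Equiv.Perm (Fin n), M * permMat n k g = permMat n l g * M}
  add_mem' := by
    intro a b ha hb g
    rw [Matrix.add_mul, Matrix.mul_add, ha g, hb g]
  zero_mem' := by
    intro g
    rw [Matrix.zero_mul, Matrix.mul_zero]
  smul_mem' := by
    intro c a ha g
    rw [Matrix.smul_mul, Matrix.mul_smul, ha g]

/-!
An equivariant matrix is a function of the pair of index tuples `(I, J)` that is invariant under
the diagonal action of `Sₙ`, i.e. a function on the `Sₙ`-orbits of `Fin (l + k) → Fin n`. Each
orbit contains exactly one restricted growth string (each letter is at most the number of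
distinct letters before it), and those with `t` distinct values satisfy the Stirling recurrence
`S(m + 1, t + 1) = (t + 1) S(m, t + 1) + S(m, t)`: the last letter is either one of the `t + 1`
values already used or the new value `t`.
-/

open Equiv MulAction Finset

section Equivariance

variable {n l k : ℕ}

lemma mul_permMat_apply (M : Matrix (Fin l → Fin n) (Fin k → Fin n) ℝ) (g : Perm (Fin n))
    (I : Fin l → Fin n) (J : Fin k → Fin n) : (M * permMat n k g) I J = M I (g • J) := by
  simp only [Matrix.mul_apply, permMat, Matrix.of_apply, mul_ite, mul_one, mul_zero]
  exact sum_ite_eq' _ _ _ |>.trans (if_pos (mem_univ _))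

lemma permMat_mul_apply (M : Matrix (Fin l → Fin n) (Fin k → Fin n) ℝ) (g : Perm (Fin n))
    (I : Fin l → Fin n) (J : Fin k → Fin n) : (permMat n l g * M) I J = M (g⁻¹ • I) J := by
  have hI : ∀ I' : Fin l → Fin n, I = ⇑g ∘ I' ↔ g⁻¹ • I = I' := fun I' => by
    change I = g • I' ↔ _
    rw [eq_comm, ← eq_inv_smul_iff, eq_comm]
  simp only [Matrix.mul_apply, permMat, Matrix.of_apply, ite_mul, one_mul, zero_mul, hI]
  exact sum_ite_eq _ _ _ |>.trans (if_pos (mem_univ _))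

lemma mem_equivariantSubmodule_iff {M : Matrix (Fin l → Fin n) (Fin k → Fin n) ℝ} :
    M ∈ equivariantSubmodule n l k ↔
      ∀ (g : Perm (Fin n)) I J, M (g • I) (g • J) = M I J := by
  refine ⟨fun hM g I J => ?_, fun hM g => Matrix.ext fun I J => ?_⟩
  · simpa [mul_permMat_apply, permMat_mul_apply] using congrFun₂ (hM g) (g • I) J
  · simpa [mul_permMat_apply, permMat_mul_apply] using hM g (g⁻¹ • I) J

lemma Fin.append_smul {G α : Type*} [SMul G α] (g : G) (I : Fin l → α) (J : Fin k → α) :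
    Fin.append (g • I) (g • J) = g • Fin.append I J := by
  funext i
  refine Fin.addCases (fun i => ?_) (fun j => ?_) i <;> simp

noncomputable def orbitFunEquivEquivariantSubmodule (n l k : ℕ) :
    (orbitRel.Quotient (Perm (Fin n)) (Fin (l + k) → Fin n) → ℝ) ≃ₗ[ℝ]
      equivariantSubmodule n l k where
  toFun f := ⟨Matrix.of fun I J => f ⟦Fin.append I J⟧,
    mem_equivariantSubmodule_iff.2 fun g I J => by
      simp only [Matrix.of_apply, Fin.append_smul, orbitRel.Quotient.quotient_smul_eq]⟩
  map_add' _ _ := rfl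
  map_smul' _ _ := rfl
  invFun M :=
    Quotient.lift (fun x => M.1 (fun i => x (Fin.castAdd k i)) (fun j => x (Fin.natAdd l j)))
    (by rintro _ x ⟨g, rfl⟩; exact mem_equivariantSubmodule_iff.1 M.2 g _ _)
  left_inv f := funext fun q => Quotient.inductionOn q fun x => by
    simp [Fin.append_castAdd_natAdd]
  right_inv M := Subtype.ext <| Matrix.ext fun I J => by simp

end Equivariance

section RestrictedGrowth

variable {n m : ℕ}

def IsRestrictedGrowth : {m : ℕ} → (Fin m → Fin n) → Prop
  | 0, _ => True
  | m + 1, f =>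
    IsRestrictedGrowth (Fin.init f) ∧ (f (Fin.last m) : ℕ) ≤ #(univ.image (Fin.init f))

@[simp]
lemma isRestrictedGrowth_snoc {g : Fin m → Fin n} {x : Fin n} :
    IsRestrictedGrowth (Fin.snoc g x : Fin (m + 1) → Fin n) ↔
      IsRestrictedGrowth g ∧ (x : ℕ) ≤ #(univ.image g) := by
  simp [IsRestrictedGrowth, Fin.init_snoc, Fin.snoc_last]

lemma Fin.univ_image_snoc {α : Type*} [DecidableEq α] (g : Fin m → α) (x : α) :
    univ.image (Fin.snoc g x : Fin (m + 1) → α) = insert x (univ.image g) := by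
  apply coe_injective
  push_cast
  simp only [Set.image_univ, Fin.range_snoc]

lemma Fin.smul_snoc {G α : Type*} [SMul G α] (σ : G) (g : Fin m → α) (x : α) :
    σ • (Fin.snoc g x : Fin (m + 1) → α) = Fin.snoc (σ • g) (σ • x) :=
  Fin.comp_snoc (σ • ·) g x

lemma IsRestrictedGrowth.mem_image_iff {f : Fin m → Fin n} (hf : IsRestrictedGrowth f)
    (v : Fin n) : v ∈ univ.image f ↔ (v : ℕ) < #(univ.image f) := by
  induction f using Fin.snocInduction generalizing v with
  | elim0 => simp
  | snoc g x ih =>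
    obtain ⟨hg, hx⟩ := isRestrictedGrowth_snoc.1 hf
    rw [Fin.univ_image_snoc]
    by_cases hxg : x ∈ univ.image g
    · rw [insert_eq_of_mem hxg]
      exact ih hg v
    · have hx : (x : ℕ) = #(univ.image g) := le_antisymm hx (not_lt.1 (mt (ih hg x).2 hxg))
      rw [card_insert_of_notMem hxg, mem_insert, ih hg, Nat.lt_succ_iff_lt_or_eq, ← hx,
        Fin.val_inj, or_comm]

lemma IsRestrictedGrowth.snoc_and_card_image_iff {g : Fin m → Fin n}
    (hg : IsRestrictedGrowth g) {x : Fin n} {s : ℕ} :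
    IsRestrictedGrowth (Fin.snoc g x : Fin (m + 1) → Fin n) ∧
        #(univ.image (Fin.snoc g x)) = s ↔
      (x : ℕ) < #(univ.image g) ∧ #(univ.image g) = s ∨
        (x : ℕ) = #(univ.image g) ∧ #(univ.image g) + 1 = s := by
  rw [isRestrictedGrowth_snoc, Fin.univ_image_snoc, and_assoc, and_iff_right hg]
  by_cases hxg : x ∈ univ.image g
  · have hx := (hg.mem_image_iff x).1 hxg
    rw [insert_eq_of_mem hxg]
    omega
  · have hx := mt (hg.mem_image_iff x).2 hxg
    rw [card_insert_of_notMem hxg]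
    omega

lemma IsRestrictedGrowth.smul_eq_self {f : Fin m → Fin n} (hf : IsRestrictedGrowth f)
    {σ : Perm (Fin n)} (hσf : IsRestrictedGrowth (σ • f)) : σ • f = f := by
  induction f using Fin.snocInduction with
  | elim0 => exact funext fun i => i.elim0
  | snoc g x ih =>
    rw [Fin.smul_snoc, Perm.smul_def] at hσf ⊢
    rw [isRestrictedGrowth_snoc] at hσf
    obtain ⟨hg, hx⟩ := isRestrictedGrowth_snoc.1 hf
    have hσg : σ • g = g := ih hg hσf.1
    have hσx_mem : σ x ∈ univ.image g ↔ x ∈ univ.image g := by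
      simp only [mem_image, mem_univ, true_and]
      refine exists_congr fun j => ?_
      nth_rw 1 [← congrFun hσg j]
      rw [Pi.smul_apply, Perm.smul_def, σ.apply_eq_iff_eq]
    suffices σ x = x by rw [hσg, this]
    by_cases hxg : x ∈ univ.image g
    · obtain ⟨j, -, rfl⟩ := mem_image.1 hxg
      exact congrFun hσg j
    · have h₁ := mt (hg.mem_image_iff x).2 hxg
      have h₂ := mt (hg.mem_image_iff (σ x)).2 (mt hσx_mem.1 hxg)
      rw [hσg] at hσf
      exact Fin.ext (by omega)

lemma exists_isRestrictedGrowth_smul (f : Fin m → Fin n) :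
    ∃ σ : Perm (Fin n), IsRestrictedGrowth (σ • f) := by
  induction f using Fin.snocInduction with
  | elim0 => exact ⟨1, trivial⟩
  | snoc g x ih =>
    obtain ⟨σ, hσ⟩ := ih
    by_cases hx : σ x ∈ univ.image (σ • g)
    · refine ⟨σ, ?_⟩
      rw [Fin.smul_snoc, isRestrictedGrowth_snoc]
      exact ⟨hσ, ((hσ.mem_image_iff _).1 hx).le⟩
    · -- `σ x` is a new value: move it to the first unused one, `c`.
      have hc := not_lt.1 (mt (hσ.mem_image_iff _).2 hx)
      set c : Fin n := ⟨#(univ.image (σ • g)), hc.trans_lt (σ x).2⟩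
      have hswap : swap (σ x) c • σ • g = σ • g := funext fun j => by
        have hj := (hσ.mem_image_iff _).1 (mem_image_of_mem (σ • g) (mem_univ j))
        refine swap_apply_of_ne_of_ne (fun h => hx ?_) (fun h => ?_)
        · exact h ▸ mem_image_of_mem _ (mem_univ j)
        · simp [h, c] at hj
      refine ⟨swap (σ x) c * σ, ?_⟩
      rw [Fin.smul_snoc, mul_smul, hswap, isRestrictedGrowth_snoc, Perm.smul_def, Perm.mul_apply,
        swap_apply_left]
      exact ⟨hσ, le_rfl⟩

noncomputable def restrictedGrowthEquivOrbits (m n : ℕ) :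
    {f : Fin m → Fin n // IsRestrictedGrowth f} ≃
      orbitRel.Quotient (Perm (Fin n)) (Fin m → Fin n) :=
  Equiv.ofBijective (fun f => ⟦f.1⟧) ⟨fun f f' h => by
      obtain ⟨σ, hσ : σ • f'.1 = f.1⟩ := Quotient.exact h
      exact Subtype.ext (hσ.symm.trans (f'.2.smul_eq_self (hσ ▸ f.2))),
    fun q => Quotient.inductionOn q fun f => by
      obtain ⟨σ, hσ⟩ := exists_isRestrictedGrowth_smul f
      exact ⟨⟨σ • f, hσ⟩, orbitRel.Quotient.quotient_smul_eq⟩⟩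

abbrev RestrictedGrowthString (n m t : ℕ) :=
  {f : Fin m → Fin n // IsRestrictedGrowth f ∧ #(univ.image f) = t}

def RestrictedGrowthString.snoc {t : ℕ} (ht : t < n) :
    RestrictedGrowthString n m (t + 1) × Fin (t + 1) ⊕ RestrictedGrowthString n m t →
      RestrictedGrowthString n (m + 1) (t + 1)
  | .inl (g, x) => ⟨Fin.snoc g.1 (Fin.castLE ht x),
      g.2.1.snoc_and_card_image_iff.2 (Or.inl ⟨by rw [g.2.2]; exact x.2, g.2.2⟩)⟩
  | .inr g => ⟨Fin.snoc g.1 ⟨t, ht⟩,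
      g.2.1.snoc_and_card_image_iff.2 (Or.inr ⟨g.2.2.symm, by rw [g.2.2]⟩)⟩

lemma RestrictedGrowthString.snoc_bijective {t : ℕ} (ht : t < n) :
    Function.Bijective (RestrictedGrowthString.snoc (m := m) ht) := by
  constructor
  · rintro (⟨g, x⟩ | g) (⟨g', x'⟩ | g') h <;>
      simp only [RestrictedGrowthString.snoc, Subtype.mk.injEq] at h <;>
      obtain ⟨hg, hx⟩ := Fin.snoc_injective2 h
    · rw [Subtype.ext hg, Fin.castLE_injective _ hx]
    · have := hg ▸ g.2.2; have := g'.2.2; omega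
    · have := hg ▸ g.2.2; have := g'.2.2; omega
    · rw [Subtype.ext hg]
  · rintro ⟨f, hf⟩
    obtain ⟨g, x, rfl⟩ : ∃ g x, f = Fin.snoc g x := ⟨_, _, (Fin.snoc_init_self f).symm⟩
    have hg := (isRestrictedGrowth_snoc.1 hf.1).1
    rcases hg.snoc_and_card_image_iff.1 hf with ⟨hx, hcard⟩ | ⟨hx, hcard⟩
    · exact ⟨.inl (⟨g, hg, hcard⟩, ⟨x, hcard ▸ hx⟩), rfl⟩
    · refine ⟨.inr ⟨g, hg, by omega⟩, Subtype.ext ?_⟩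
      simp only [RestrictedGrowthString.snoc]
      congr
      omega

lemma card_restrictedGrowthString {t : ℕ} (ht : t ≤ n) :
    Fintype.card (RestrictedGrowthString n m t) = stirlingSecond m t := by
  induction m generalizing t with
  | zero =>
    cases t with
    | zero =>
      exact Fintype.card_eq_one_iff.2
        ⟨⟨Fin.elim0, trivial, by simp⟩, fun f => Subtype.ext (funext fun i => i.elim0)⟩
    | succ t => exact Fintype.card_eq_zero_iff.2 ⟨fun f => by simpa using f.2.2⟩
  | succ m ih =>
    cases t with
    | zero =>
      exact Fintype.card_eq_zero_iff.2 ⟨fun f => (univ_nonempty.image f.1).card_pos.ne' f.2.2⟩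
    | succ t =>
      rw [← Fintype.card_of_bijective (RestrictedGrowthString.snoc_bijective ht),
        Fintype.card_sum, Fintype.card_prod, Fintype.card_fin, ih ht, ih (by omega),
        stirlingSecond, mul_comm]

lemma card_orbitRel_quotient_eq_sum_stirlingSecond {m : ℕ} (hm : m ≠ 0) (n : ℕ) :
    Fintype.card (orbitRel.Quotient (Perm (Fin n)) (Fin m → Fin n)) =
      ∑ t ∈ Icc 1 n, stirlingSecond m t := by
  have hcard (f : Fin m → Fin n) : #(univ.image f) ∈ Icc 1 n := by
    have : NeZero m := ⟨hm⟩
    exact mem_Icc.2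
      ⟨(univ_nonempty.image f).card_pos, (card_le_univ _).trans_eq (Fintype.card_fin n)⟩
  rw [← Fintype.card_congr (restrictedGrowthEquivOrbits m n), Fintype.card_subtype,
    card_eq_sum_card_fiberwise fun f _ => hcard f]
  refine sum_congr rfl fun t ht => ?_
  rw [← card_restrictedGrowthString (mem_Icc.1 ht).2, Fintype.card_subtype, filter_filter]

end RestrictedGrowth

/-- The dimension of the space of `Sₙ`-equivariant linear maps from `(ℝⁿ)^{⊗k}` to
`(ℝⁿ)^{⊗l}` equals `∑_{t=1}^{n} S(l+k, t)`, the number of set partitions of `[l+k]`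
into at most `n` blocks, for `l + k ≥ 1`. -/
theorem finrank_equivariant (n l k : ℕ) (h : 1 ≤ l + k) :
    Module.finrank ℝ (equivariantSubmodule n l k) =
      ∑ t ∈ Finset.Icc 1 n, stirlingSecond (l + k) t := by
  rw [← (orbitFunEquivEquivariantSubmodule n l k).finrank_eq, Module.finrank_fintype_fun_eq_card,
    card_orbitRel_quotient_eq_sum_stirlingSecond (by omega)]
end

section
/- In the partition category, composition of partition diagrams is associative: for composable diagrams, (d₃ • d₂) • d₁ = d₃ • (d₂ • d₁), where • includes the factor n^{c} counting removed middle-row connected components. -/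
open scoped Classical

/-- The relation generating the concatenation of an `(l,m)`-partition diagram `d₂`
(top `m`, bottom `l`) on top of a `(k,l)`-partition diagram `d₁` (top `l`, bottom `k`):
the middle row of `l` vertices is shared. -/
def concatRel (m l k : ℕ) (d₂ : Setoid (Fin m ⊕ Fin l)) (d₁ : Setoid (Fin l ⊕ Fin k)) :
    (Fin m ⊕ (Fin l ⊕ Fin k)) → (Fin m ⊕ (Fin l ⊕ Fin k)) → Prop := fun x y =>
  (∃ a b, d₂.r a b ∧ x = Sum.map id Sum.inl a ∧ y = Sum.map id Sum.inl b) ∨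
  (∃ a b, d₁.r a b ∧ x = Sum.inr a ∧ y = Sum.inr b)

/-- The equivalence relation on the three rows generated by stacking `d₂` on top of `d₁`. -/
def concatSetoid (m l k : ℕ) (d₂ : Setoid (Fin m ⊕ Fin l)) (d₁ : Setoid (Fin l ⊕ Fin k)) :
    Setoid (Fin m ⊕ (Fin l ⊕ Fin k)) :=
  Relation.EqvGen.setoid (concatRel m l k d₂ d₁)

/-- The composed `(k,m)`-partition diagram: restrict the stacked equivalence relation to
the outer (top and bottom) rows. -/
def compDiagram (m l k : ℕ) (d₂ : Setoid (Fin m ⊕ Fin l)) (d₁ : Setoid (Fin l ⊕ Fin k)) :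
    Setoid (Fin m ⊕ Fin k) :=
  Setoid.comap (Sum.map id Sum.inr) (concatSetoid m l k d₂ d₁)

/-- The number of connected components of the concatenated diagram lying entirely in the
middle row; these are removed during composition. -/
noncomputable def removedCount (m l k : ℕ) (d₂ : Setoid (Fin m ⊕ Fin l))
    (d₁ : Setoid (Fin l ⊕ Fin k)) : ℕ :=
  Nat.card {q : Quotient (concatSetoid m l k d₂ d₁) //
    ∀ x, Quotient.mk (concatSetoid m l k d₂ d₁) x = q → ∃ y : Fin l, x = Sum.inr (Sum.inl y)}

/-- The bilinear composition `•` on the linear spans of partition diagrams: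
`d₂ • d₁ = n^{c(d₂,d₁)} (d₂ ∘ d₁)`, extended bilinearly. -/
noncomputable def bullet (n m l k : ℕ) (x : Setoid (Fin m ⊕ Fin l) →₀ ℝ)
    (y : Setoid (Fin l ⊕ Fin k) →₀ ℝ) : Setoid (Fin m ⊕ Fin k) →₀ ℝ :=
  x.sum fun d₂ a => y.sum fun d₁ b =>
    Finsupp.single (compDiagram m l k d₂ d₁) (a * b * (n : ℝ) ^ removedCount m l k d₂ d₁)

/-!
Stack the three diagrams on four rows `p, m, l, k` and let `T` be the equivalence relation they
generate. For an equivalence `E` and a map `f`, `(E ⊔ s.map f).comap f = E.comap f ⊔ s`; hence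
restricting `T` to the rows `p, l, k` gives the stacking of `d₃ ∘ d₂` on `d₁`, restricting it to
`p, m, k` gives the stacking of `d₃` on `d₂ ∘ d₁`, and both composites are `T` restricted to the
outer rows `p, k`. The classes of `T` missing the rows `p, l, k` are exactly the classes of the
stacking of `d₃` on `d₂` inside row `m`, so the number of classes of `T` is the number of classes
of the composite plus `c(d₃, d₂) + c(d₃ ∘ d₂, d₁)`, and symmetrically plus
`c(d₂, d₁) + c(d₃, d₂ ∘ d₁)`. The powers of `n` therefore agree, and bilinearity does the rest.
-/

open Function

namespace Setoid

variable {α β γ δ : Type*}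

theorem map_le_iff_le_comap {r : Setoid α} {f : α → β} {s : Setoid β} :
    r.map f ≤ s ↔ r ≤ s.comap f :=
  ⟨fun h _ _ hr => h (Relation.EqvGen.rel _ _ ⟨_, _, hr, rfl, rfl⟩),
    fun h => eqvGen_le fun _ _ ⟨_, _, hr, hx, hy⟩ => hx ▸ hy ▸ h hr⟩

theorem gc_map_comap (f : α → β) : GaloisConnection (map · f) (comap f) :=
  fun _ _ => map_le_iff_le_comap

theorem map_sup (r s : Setoid α) (f : α → β) : (r ⊔ s).map f = r.map f ⊔ s.map f :=
  (gc_map_comap f).l_sup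

theorem map_map (r : Setoid α) (f : α → β) (g : β → γ) : (r.map f).map g = r.map (g ∘ f) :=
  ((gc_map_comap f).compose (gc_map_comap g)).l_unique (gc_map_comap (g ∘ f)) fun _ => rfl

theorem eqvGen_setoid_sup (r s : α → α → Prop) :
    Relation.EqvGen.setoid (r ⊔ s) = Relation.EqvGen.setoid r ⊔ Relation.EqvGen.setoid s :=
  gi.gc.l_sup

theorem map_rel_iff_of_injective {r : Setoid α} {f : α → β} (hf : Injective f) {x y : β} :
    r.map f x y ↔ x = y ∨ ∃ a b, r a b ∧ f a = x ∧ f b = y := by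
  rw [coe_map_of_ker_le r f (ker_eq_bot_iff.2 hf ▸ bot_le)]
  exact or_comm

theorem eq_of_map_rel_of_notMem_range {r : Setoid α} {f : α → β} (hf : Injective f) {x y : β}
    (h : r.map f x y) (hx : x ∉ Set.range f) : x = y :=
  ((map_rel_iff_of_injective hf).1 h).resolve_right fun ⟨a, _, _, ha, _⟩ => hx ⟨a, ha⟩

theorem comap_sup_map (f : α → β) (E : Setoid β) (s : Setoid α) :
    (E ⊔ s.map f).comap f = E.comap f ⊔ s := by
  refine le_antisymm ?_ (sup_le ((gc_map_comap f).monotone_u le_sup_left)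
    (le_comap_map.trans ((gc_map_comap f).monotone_u le_sup_right)))
  set t := E.comap f ⊔ s
  have hE : ∀ {a b}, E (f a) (f b) → t a b := fun h => le_sup_left (a := E.comap f) h
  -- A chain in `β` only leaves the range of `f` inside single `E`-classes.
  let Q : Setoid β :=
    { r := fun u v => E u v ∨ ∃ a b, E u (f a) ∧ t a b ∧ E (f b) v
      iseqv :=
        { refl := fun u => .inl (E.refl' u)
          symm := by
            rintro u v (h | ⟨a, b, h₁, h₂, h₃⟩)
            · exact .inl (E.symm' h)
            · exact .inr ⟨b, a, E.symm' h₃, t.symm' h₂, E.symm' h₁⟩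
          trans := by
            rintro u v w (h | ⟨a, b, h₁, h₂, h₃⟩) (h' | ⟨a', b', h₁', h₂', h₃'⟩)
            · exact .inl (E.trans' h h')
            · exact .inr ⟨a', b', E.trans' h h₁', h₂', h₃'⟩
            · exact .inr ⟨a, b, h₁, h₂, E.trans' h₃ h'⟩
            · exact .inr ⟨a, b', h₁, t.trans' (t.trans' h₂ (hE (E.trans' h₃ h₁'))) h₂', h₃'⟩ } }
  have hQ : E ⊔ s.map f ≤ Q := sup_le (fun _ _ h => .inl h)
    (map_le_iff_le_comap.2 fun a b h =>
      .inr ⟨a, b, E.refl' _, le_sup_right (a := E.comap f) h, E.refl' _⟩)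
  rintro x y hxy
  rcases hQ hxy with h | ⟨a, b, h₁, h₂, h₃⟩
  · exact hE h
  · exact t.trans' (t.trans' (hE h₁) h₂) (hE h₃)

theorem comap_map_eq_map_comap {i : δ → γ} {j : β → γ} {a : α → δ} {c : α → β}
    (hi : Injective i) (hj : Injective j) (ha : Injective a) (comm : ∀ z, i (a z) = j (c z))
    (pullback : ∀ x u, i x = j u → ∃ z, a z = x ∧ c z = u) (U : Setoid β) :
    (U.map j).comap i = (U.comap c).map a := by
  ext x y
  rw [comap_rel, map_rel_iff_of_injective hj, map_rel_iff_of_injective ha, hi.eq_iff]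
  refine or_congr_right ⟨?_, ?_⟩
  · rintro ⟨u, v, huv, hu, hv⟩
    obtain ⟨z, rfl, rfl⟩ := pullback x u hu.symm
    obtain ⟨w, rfl, rfl⟩ := pullback y v hv.symm
    exact ⟨z, w, huv, rfl, rfl⟩
  · rintro ⟨z, w, hzw, rfl, rfl⟩
    exact ⟨c z, c w, hzw, (comm z).symm, (comm w).symm⟩

noncomputable def classesWithin (r : Setoid α) (S : Set α) : ℕ :=
  Nat.card {q : Quotient r // ∀ x, Quotient.mk r x = q → x ∈ S}

theorem card_quotient_eq_card_comap_add [Finite β] (r : Setoid β) (f : α → β) :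
    Nat.card (Quotient r) =
      Nat.card (Quotient (r.comap f)) + r.classesWithin (Set.range f)ᶜ := by
  classical
  let P : Quotient r → Prop := (· ∈ Set.range (Quotient.mk r ∘ f))
  have hcompl : r.classesWithin (Set.range f)ᶜ = Nat.card {q // ¬ P q} :=
    Nat.card_congr <| Equiv.subtypeEquivRight fun q =>
      ⟨fun h ⟨a, ha⟩ => h _ ha ⟨a, rfl⟩,
        fun h x hx ⟨a, hax⟩ => h ⟨a, (congrArg (Quotient.mk r) hax).trans hx⟩⟩
  rw [hcompl, Nat.card_congr (comapQuotientEquiv f r), ← Nat.card_sum,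
    Nat.card_congr (Equiv.sumCompl P)]

theorem exists_rel_eq_of_map_sup_rel {j : β → γ} (hj : Injective j) {U : Setoid β}
    {E : Setoid γ} {S : Set β} (hE : ∀ x y, E x y → x ∈ j '' S → x = y) {u : β}
    (hu : ∀ v, U u v → v ∈ S) {y : γ} (h : (U.map j ⊔ E) (j u) y) : ∃ v, U u v ∧ j v = y := by
  let C : Set γ := j '' {v | U u v}
  have hCS : C ⊆ j '' S := Set.image_mono fun v => hu v
  have hC : U.map j ⊔ E ≤ ker (· ∈ C) := by
    refine sup_le (map_le_iff_le_comap.2 fun a b hab => ?_) fun x y hxy => ?_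
    · simp only [comap_rel, ker_def, C, hj.mem_set_image, Set.mem_ofPred_eq, eq_iff_iff]
      exact ⟨fun h => U.trans' h hab, fun h => U.trans' h (U.symm' hab)⟩
    · refine ker_def.2 (propext ⟨fun hx => ?_, fun hy => ?_⟩)
      · exact hE x y hxy (hCS hx) ▸ hx
      · exact hE y x (E.symm' hxy) (hCS hy) ▸ hy
  exact (ker_def.1 (hC h)).mp ⟨u, U.refl' u, rfl⟩

theorem classesWithin_map_sup {j : β → γ} (hj : Injective j) (U : Setoid β) (E : Setoid γ)
    (S : Set β) (hE : ∀ x y, E x y → x ∈ j '' S → x = y) :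
    (U.map j ⊔ E).classesWithin (j '' S) = U.classesWithin S := by
  set T := U.map j ⊔ E
  have hUT : U ≤ T.comap j := map_le_iff_le_comap.1 le_sup_left
  symm
  refine Nat.card_congr (Equiv.ofBijective
    (fun q => ⟨Quotient.map j (fun _ _ h => hUT h) q.1, ?_⟩) ⟨?_, ?_⟩)
  · obtain ⟨q, hq⟩ := q
    obtain ⟨u, rfl⟩ := q.exists_rep
    intro x hx
    obtain ⟨v, huv, rfl⟩ := exists_rel_eq_of_map_sup_rel hj hE (fun v h => hq v
      (Quotient.sound (U.symm' h))) (T.symm' (Quotient.exact hx))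
    exact ⟨v, hq v (Quotient.sound (U.symm' huv)), rfl⟩
  · rintro ⟨q, hq⟩ ⟨q', _⟩ h
    obtain ⟨u, rfl⟩ := q.exists_rep
    obtain ⟨u', rfl⟩ := q'.exists_rep
    obtain ⟨v, huv, hv⟩ := exists_rel_eq_of_map_sup_rel hj hE (fun v h => hq v
      (Quotient.sound (U.symm' h))) (Quotient.exact (congrArg Subtype.val h))
    exact Subtype.ext (Quotient.sound (hj hv ▸ huv))
  · rintro ⟨Q, hQ⟩
    obtain ⟨x, rfl⟩ := Q.exists_rep
    obtain ⟨u, -, rfl⟩ := hQ x rfl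
    refine ⟨⟨Quotient.mk U u, fun v hv => ?_⟩, rfl⟩
    exact hj.mem_set_image.1 (hQ (j v) (Quotient.sound (hUT (Quotient.exact hv))))

end Setoid

open Setoid

theorem concatSetoid_eq_sup (m l k : ℕ) (d₂ : Setoid (Fin m ⊕ Fin l))
    (d₁ : Setoid (Fin l ⊕ Fin k)) :
    concatSetoid m l k d₂ d₁ = d₂.map (Sum.map id Sum.inl) ⊔ d₁.map Sum.inr := by
  rw [Setoid.map, Setoid.map, ← eqvGen_setoid_sup, concatSetoid]
  congr
  funext x y
  simp only [concatRel, Relation.Map, eq_comm, Pi.sup_apply, sup_Prop_eq]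

theorem removedCount_eq_classesWithin (m l k : ℕ) (d₂ : Setoid (Fin m ⊕ Fin l))
    (d₁ : Setoid (Fin l ⊕ Fin k)) :
    removedCount m l k d₂ d₁ =
      (concatSetoid m l k d₂ d₁).classesWithin (Set.range (Sum.map id Sum.inr))ᶜ := by
  refine Nat.card_congr (Equiv.subtypeEquivRight fun q => forall_congr' fun x =>
    imp_congr_right fun _ => ?_)
  rcases x with x | x | x <;> simp

theorem card_quotient_concatSetoid (m l k : ℕ) (d₂ : Setoid (Fin m ⊕ Fin l))
    (d₁ : Setoid (Fin l ⊕ Fin k)) :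
    Nat.card (Quotient (concatSetoid m l k d₂ d₁)) =
      Nat.card (Quotient (compDiagram m l k d₂ d₁)) + removedCount m l k d₂ d₁ := by
  rw [removedCount_eq_classesWithin]
  exact card_quotient_eq_card_comap_add _ _

section Stack

/- `stackSetoid d₃ d₂ d₁` lives on the rows `p, m, l, k`, from top to bottom. `Sum.map id Sum.inr`
includes the rows `p, l, k` and `Sum.map id (Sum.map id Sum.inr)` the rows `p, m, k`; the suffix
`_left` refers to the bracketing `(d₃ ∘ d₂) ∘ d₁` and `_right` to `d₃ ∘ (d₂ ∘ d₁)`. -/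

variable {p m l k : ℕ} (d₃ : Setoid (Fin p ⊕ Fin m)) (d₂ : Setoid (Fin m ⊕ Fin l))
  (d₁ : Setoid (Fin l ⊕ Fin k))

def stackSetoid : Setoid (Fin p ⊕ Fin m ⊕ Fin l ⊕ Fin k) :=
  d₃.map (Sum.map id Sum.inl) ⊔ d₂.map (Sum.inr ∘ Sum.map id Sum.inl) ⊔ d₁.map (Sum.inr ∘ Sum.inr)

theorem stackSetoid_eq_sup_left : stackSetoid d₃ d₂ d₁ =
    (concatSetoid p m l d₃ d₂).map (Sum.map id (Sum.map id Sum.inl)) ⊔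
      (d₁.map Sum.inr).map (Sum.map id Sum.inr) := by
  rw [concatSetoid_eq_sup, map_sup, map_map, map_map, map_map, stackSetoid]
  congr
  ext (x | x) <;> rfl

theorem stackSetoid_eq_sup_right : stackSetoid d₃ d₂ d₁ =
    (concatSetoid m l k d₂ d₁).map Sum.inr ⊔
      (d₃.map (Sum.map id Sum.inl)).map (Sum.map id (Sum.map id Sum.inr)) := by
  rw [concatSetoid_eq_sup, map_sup, map_map, map_map, map_map, stackSetoid, sup_assoc, sup_comm]
  congr
  ext (x | x) <;> rfl

theorem comap_stackSetoid_left : (stackSetoid d₃ d₂ d₁).comap (Sum.map id Sum.inr) =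
    concatSetoid p l k (compDiagram p m l d₃ d₂) d₁ := by
  rw [stackSetoid_eq_sup_left, concatSetoid_eq_sup p l k, comap_sup_map, comap_map_eq_map_comap
    (injective_id.sumMap Sum.inr_injective)
    (injective_id.sumMap (injective_id.sumMap Sum.inl_injective))
    (injective_id.sumMap Sum.inl_injective) (c := Sum.map id Sum.inr)
    (by rintro (x | x) <;> rfl) ?_]
  · rfl
  · rintro (x | x | x) (u | u | u) h <;> simp at h ⊢ <;> exact h

theorem comap_stackSetoid_right :
    (stackSetoid d₃ d₂ d₁).comap (Sum.map id (Sum.map id Sum.inr)) =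
      concatSetoid p m k d₃ (compDiagram m l k d₂ d₁) := by
  rw [stackSetoid_eq_sup_right, concatSetoid_eq_sup p m k, comap_sup_map, comap_map_eq_map_comap
    (injective_id.sumMap (injective_id.sumMap Sum.inr_injective))
    Sum.inr_injective Sum.inr_injective (c := Sum.map id Sum.inr)
    (fun _ => rfl) ?_, sup_comm]
  · rfl
  · rintro (x | x | x) (u | u | u) h <;> simp at h ⊢ <;> exact h

theorem compDiagram_assoc : compDiagram p l k (compDiagram p m l d₃ d₂) d₁ =
    compDiagram p m k d₃ (compDiagram m l k d₂ d₁) := by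
  have outer : (Sum.map id Sum.inr ∘ Sum.map id Sum.inr :
      Fin p ⊕ Fin k → Fin p ⊕ Fin m ⊕ Fin l ⊕ Fin k) =
      Sum.map id (Sum.map id Sum.inr) ∘ Sum.map id Sum.inr := by
    ext (x | x) <;> rfl
  change (concatSetoid p l k _ d₁).comap _ = (concatSetoid p m k d₃ _).comap _
  rw [← comap_stackSetoid_left, ← comap_stackSetoid_right]
  exact congrArg (comap · (stackSetoid d₃ d₂ d₁)) outer

theorem compl_range_eq_image_left :
    (Set.range (Sum.map id Sum.inr : Fin p ⊕ Fin l ⊕ Fin k → Fin p ⊕ Fin m ⊕ Fin l ⊕ Fin k))ᶜ =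
      Sum.map id (Sum.map id Sum.inl) '' (Set.range (Sum.map id Sum.inr : Fin p ⊕ Fin l → _))ᶜ := by
  ext (x | x | x | x) <;> simp

theorem card_quotient_stackSetoid_eq_left : Nat.card (Quotient (stackSetoid d₃ d₂ d₁)) =
    Nat.card (Quotient (compDiagram p l k (compDiagram p m l d₃ d₂) d₁)) +
      removedCount p l k (compDiagram p m l d₃ d₂) d₁ + removedCount p m l d₃ d₂ := by
  rw [card_quotient_eq_card_comap_add _ (Sum.map id Sum.inr), comap_stackSetoid_left,
    card_quotient_concatSetoid, compl_range_eq_image_left, stackSetoid_eq_sup_left,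
    classesWithin_map_sup (injective_id.sumMap (injective_id.sumMap Sum.inl_injective)) _ _ _
      fun x y h hx => eq_of_map_rel_of_notMem_range (injective_id.sumMap Sum.inr_injective) h
        (by rwa [← compl_range_eq_image_left] at hx),
    removedCount_eq_classesWithin p m l]

theorem compl_range_eq_image_right :
    (Set.range (Sum.map id (Sum.map id Sum.inr) :
      Fin p ⊕ Fin m ⊕ Fin k → Fin p ⊕ Fin m ⊕ Fin l ⊕ Fin k))ᶜ =
      Sum.inr '' (Set.range (Sum.map id Sum.inr : Fin m ⊕ Fin k → Fin m ⊕ Fin l ⊕ Fin k))ᶜ := by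
  ext (x | x | x | x) <;> simp

theorem card_quotient_stackSetoid_eq_right : Nat.card (Quotient (stackSetoid d₃ d₂ d₁)) =
    Nat.card (Quotient (compDiagram p m k d₃ (compDiagram m l k d₂ d₁))) +
      removedCount p m k d₃ (compDiagram m l k d₂ d₁) + removedCount m l k d₂ d₁ := by
  rw [card_quotient_eq_card_comap_add _ (Sum.map id (Sum.map id Sum.inr)),
    comap_stackSetoid_right, card_quotient_concatSetoid, compl_range_eq_image_right,
    stackSetoid_eq_sup_right, classesWithin_map_sup Sum.inr_injective _ _ _
      fun x y h hx => eq_of_map_rel_of_notMem_range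
        (injective_id.sumMap (injective_id.sumMap Sum.inr_injective))
        h (by rwa [← compl_range_eq_image_right] at hx),
    removedCount_eq_classesWithin m l k]

theorem removedCount_add_removedCount_assoc :
    removedCount p m l d₃ d₂ + removedCount p l k (compDiagram p m l d₃ d₂) d₁ =
      removedCount m l k d₂ d₁ + removedCount p m k d₃ (compDiagram m l k d₂ d₁) := by
  have left := card_quotient_stackSetoid_eq_left d₃ d₂ d₁
  rw [card_quotient_stackSetoid_eq_right, compDiagram_assoc] at left
  omega

end Stack

section Bullet

variable (n : ℕ) {p m l k : ℕ}

theorem bullet_single_single (D₂ : Setoid (Fin m ⊕ Fin l)) (D₁ : Setoid (Fin l ⊕ Fin k))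
    (a b : ℝ) : bullet n m l k (Finsupp.single D₂ a) (Finsupp.single D₁ b) =
      Finsupp.single (compDiagram m l k D₂ D₁) (a * b * (n : ℝ) ^ removedCount m l k D₂ D₁) := by
  rw [bullet, Finsupp.sum_single_index (by simp), Finsupp.sum_single_index (by simp)]

theorem bullet_zero_left (y : Setoid (Fin l ⊕ Fin k) →₀ ℝ) : bullet n m l k 0 y = 0 :=
  Finsupp.sum_zero_index

theorem bullet_zero_right (x : Setoid (Fin m ⊕ Fin l) →₀ ℝ) : bullet n m l k x 0 = 0 := by
  simp [bullet]

theorem bullet_add_left (x x' : Setoid (Fin m ⊕ Fin l) →₀ ℝ) (y : Setoid (Fin l ⊕ Fin k) →₀ ℝ) :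
    bullet n m l k (x + x') y = bullet n m l k x y + bullet n m l k x' y := by
  refine Finsupp.sum_add_index' (fun _ => by simp) fun _ a a' => ?_
  simp only [add_mul, Finsupp.single_add, Finsupp.sum_add]

theorem bullet_add_right (x : Setoid (Fin m ⊕ Fin l) →₀ ℝ) (y y' : Setoid (Fin l ⊕ Fin k) →₀ ℝ) :
    bullet n m l k x (y + y') = bullet n m l k x y + bullet n m l k x y' := by
  simp only [bullet, ← Finsupp.sum_add]
  refine Finsupp.sum_congr fun _ _ => Finsupp.sum_add_index' (fun _ => by simp) fun _ b b' => ?_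
  simp only [mul_add, add_mul, Finsupp.single_add]

theorem bullet_single_assoc (D₃ : Setoid (Fin p ⊕ Fin m)) (D₂ : Setoid (Fin m ⊕ Fin l))
    (D₁ : Setoid (Fin l ⊕ Fin k)) (a b c : ℝ) :
    bullet n p l k (bullet n p m l (.single D₃ a) (.single D₂ b)) (.single D₁ c) =
      bullet n p m k (.single D₃ a) (bullet n m l k (.single D₂ b) (.single D₁ c)) := by
  simp only [bullet_single_single, compDiagram_assoc]
  congr 1
  have h := congrArg ((n : ℝ) ^ ·) (removedCount_add_removedCount_assoc D₃ D₂ D₁)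
  simp only [pow_add] at h
  linear_combination a * b * c * h

end Bullet

/-- Composition of partition diagrams in the partition category is associative:
`(d₃ • d₂) • d₁ = d₃ • (d₂ • d₁)`. -/
theorem bullet_assoc (n p m l k : ℕ)
    (d₃ : Setoid (Fin p ⊕ Fin m) →₀ ℝ) (d₂ : Setoid (Fin m ⊕ Fin l) →₀ ℝ)
    (d₁ : Setoid (Fin l ⊕ Fin k) →₀ ℝ) :
    bullet n p l k (bullet n p m l d₃ d₂) d₁ = bullet n p m k d₃ (bullet n m l k d₂ d₁) := by
  induction d₃ using Finsupp.induction_linear with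
  | zero => simp only [bullet_zero_left]
  | add f g hf hg => simp only [bullet_add_left, hf, hg]
  | single D₃ a =>
    induction d₂ using Finsupp.induction_linear with
    | zero => simp only [bullet_zero_left, bullet_zero_right]
    | add f g hf hg => simp only [bullet_add_left, bullet_add_right, hf, hg]
    | single D₂ b =>
      induction d₁ using Finsupp.induction_linear with
      | zero => simp only [bullet_zero_right]
      | add f g hf hg => simp only [bullet_add_right, hf, hg]
      | single D₁ c => exact bullet_single_assoc n D₃ D₂ D₁ a b c
end

section
/- Every 0-1 matrix E_π associated to a set partition π of [l+k] can be written as P_l · E_{π'} · P_k, where P_l and P_k are permutation matrices on the tensor factors (images of permutations in S_l and S_k acting by permuting tensor positions) and π' is a planar set partition (one whose diagram can be drawn without crossings). -/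
/-!
Label the blocks of `π` injectively by natural numbers. Reorder the top vertices and the
bottom vertices, each row separately, so that the labels increase from left to right; the
reordered partition `π'` has the same blocks up to relabelling of the positions, which is
exactly what conjugating by the permutation matrices does. Read around the circle, the
labels of `π'` first rise (top row) and then fall (bottom row, traversed right to left). A
crossing `a < b < c < d` with `a ~ c`, `b ~ d` would force the label of `b` to be at least
that of `a = c` and the label of `c` to be at least that of `b = d`, so `a ~ b`.
-/

open scoped Classical

/-- The position of each vertex of a `(k,l)`-partition diagram when the vertices are
arranged around a circle: the `l` top vertices left to right, then the `k` bottom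
vertices right to left. -/
def circPos (l k : ℕ) : (Fin l ⊕ Fin k) → ℕ :=
  Sum.elim (fun i => (i : ℕ)) (fun j => l + (k - 1 - (j : ℕ)))

/-- A `(k,l)`-partition diagram is planar (can be drawn with no two connected components
crossing) iff the partition is noncrossing with respect to the circular order on the
vertices. -/
def IsPlanar (l k : ℕ) (π : Setoid (Fin l ⊕ Fin k)) : Prop :=
  ¬ ∃ a b c d : Fin l ⊕ Fin k,
      circPos l k a < circPos l k b ∧ circPos l k b < circPos l k c ∧
      circPos l k c < circPos l k d ∧ π.r a c ∧ π.r b d ∧ ¬ π.r a b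

/-- The matrix of a permutation `σ ∈ S_l` acting on `(ℝⁿ)^{⊗l}` by permuting the tensor
factors. -/
noncomputable def permFactorMat (n l : ℕ) (σ : Equiv.Perm (Fin l)) :
    Matrix (Fin l → Fin n) (Fin l → Fin n) ℝ :=
  Matrix.of fun I J => if J = I ∘ σ then 1 else 0

theorem Setoid.exists_nat_label {α : Type*} [Countable α] (π : Setoid α) :
    ∃ f : α → ℕ, ∀ a b, π.r a b ↔ f a = f b := by
  obtain ⟨g, hg⟩ := Countable.exists_injective_nat (Quotient π)
  exact ⟨g ∘ Quotient.mk π, fun a b => by simp [hg.eq_iff, Quotient.eq]⟩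

section Matrices

variable {n l k : ℕ}

theorem permFactorMat_mul_apply {κ : Type*} (σ : Equiv.Perm (Fin l))
    (M : Matrix (Fin l → Fin n) κ ℝ) (I : Fin l → Fin n) (J : κ) :
    (permFactorMat n l σ * M) I J = M (I ∘ σ) J := by
  simp [Matrix.mul_apply, permFactorMat]

theorem mul_permFactorMat_apply {κ : Type*} (M : Matrix κ (Fin k → Fin n) ℝ)
    (τ : Equiv.Perm (Fin k)) (I : κ) (J : Fin k → Fin n) :
    (M * permFactorMat n k τ) I J = M I (J ∘ ⇑τ⁻¹) := by
  have hJ (K : Fin k → Fin n) : J = K ∘ τ ↔ K = J ∘ ⇑τ⁻¹ := by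
    constructor <;> rintro rfl <;> ext <;> simp
  simp [Matrix.mul_apply, permFactorMat, hJ]

theorem Emat_comap_sumMap_apply (π : Setoid (Fin l ⊕ Fin k)) (σ : Equiv.Perm (Fin l))
    (ρ : Equiv.Perm (Fin k)) (I : Fin l → Fin n) (J : Fin k → Fin n) :
    Emat n l k (π.comap (Sum.map σ ρ)) (I ∘ σ) (J ∘ ρ) = Emat n l k π I J := by
  let e := Equiv.sumCongr σ ρ
  have hcomp : Sum.elim (I ∘ σ) (J ∘ ρ) = Sum.elim I J ∘ e := (Sum.elim_comp_map ..).symm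
  simp only [Emat, Matrix.of_apply, Setoid.comap_rel, hcomp]
  congr 1
  exact propext <| e.forall₂_congr e Iff.rfl

theorem Emat_eq_permFactorMat_mul_Emat_comap_mul (π : Setoid (Fin l ⊕ Fin k))
    (σ : Equiv.Perm (Fin l)) (ρ : Equiv.Perm (Fin k)) :
    Emat n l k π =
      permFactorMat n l σ * Emat n l k (π.comap (Sum.map σ ρ)) * permFactorMat n k ρ⁻¹ := by
  ext I J
  rw [mul_permFactorMat_apply, permFactorMat_mul_apply, inv_inv, Emat_comap_sumMap_apply]

end Matrices

section Planarity

variable {l k : ℕ} {β : Type*} [LinearOrder β]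

theorem min_le_of_circPos_lt {f : Fin l ⊕ Fin k → β} (htop : Monotone (f ∘ Sum.inl))
    (hbot : Monotone (f ∘ Sum.inr)) {a b c : Fin l ⊕ Fin k}
    (hab : circPos l k a < circPos l k b) (hbc : circPos l k b < circPos l k c) :
    min (f a) (f c) ≤ f b := by
  rcases b with i | j
  · rcases a with i' | j'
    · exact min_le_of_left_le (htop (Fin.le_iff_val_le_val.2 (le_of_lt hab)))
    · have := i.isLt
      simp only [circPos, Sum.elim_inl, Sum.elim_inr] at hab
      omega
  · rcases c with i' | j'
    · have := i'.isLt
      simp only [circPos, Sum.elim_inl, Sum.elim_inr] at hbc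
      omega
    · have := j.isLt
      simp only [circPos, Sum.elim_inr] at hbc
      exact min_le_of_right_le (hbot (Fin.le_iff_val_le_val.2 (by omega)))

theorem isPlanar_of_monotone (π : Setoid (Fin l ⊕ Fin k)) (f : Fin l ⊕ Fin k → β)
    (hf : ∀ a b, π.r a b ↔ f a = f b) (htop : Monotone (f ∘ Sum.inl))
    (hbot : Monotone (f ∘ Sum.inr)) : IsPlanar l k π := by
  rintro ⟨a, b, c, d, hab, hbc, hcd, hac, hbd, hnab⟩
  rw [hf] at hac hbd hnab
  have hfcb : f c ≤ f b := by simpa [hac] using min_le_of_circPos_lt htop hbot hab hbc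
  have hfbc : f b ≤ f c := by simpa [hbd] using min_le_of_circPos_lt htop hbot hbc hcd
  exact hnab (hac.trans (le_antisymm hfcb hfbc))

end Planarity

/-- Every matrix `E_π` factors as `P_l · E_{π'} · P_k` with `π'` planar and `P_l`, `P_k`
the matrices of permutations of the tensor factors. -/
theorem Emat_factor_planar (n l k : ℕ) (π : Setoid (Fin l ⊕ Fin k)) :
    ∃ (σ : Equiv.Perm (Fin l)) (τ : Equiv.Perm (Fin k)) (π' : Setoid (Fin l ⊕ Fin k)),
      IsPlanar l k π' ∧
      Emat n l k π = permFactorMat n l σ * Emat n l k π' * permFactorMat n k τ := by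
  obtain ⟨f, hf⟩ := π.exists_nat_label
  set σ := Tuple.sort (f ∘ Sum.inl)
  set ρ := Tuple.sort (f ∘ Sum.inr)
  refine ⟨σ, ρ⁻¹, π.comap (Sum.map σ ρ), ?_, Emat_eq_permFactorMat_mul_Emat_comap_mul π σ ρ⟩
  exact isPlanar_of_monotone _ (f ∘ Sum.map σ ρ) (fun a b => hf _ _)
    (Tuple.monotone_sort (f ∘ Sum.inl)) (Tuple.monotone_sort (f ∘ Sum.inr))
end

section
/- For the orthogonal group O(n) acting diagonally on tensor powers of ℝⁿ, for each perfect matching β of [l+k] (a (k,l)-Brauer diagram), the matrix E_β with (I,J) entry the product over pairs {x,y} ∈ β of the Kronecker delta of the corresponding indices is O(n)-equivariant. -/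
open scoped Classical

/-- The matrix of the diagonal action of `A ∈ GL(n,ℝ)` on the `k`-th tensor power of
`ℝⁿ` (the `k`-fold Kronecker power of `A`), in the basis of tuples. -/
noncomputable def tpowMat (n k : ℕ) (A : Matrix (Fin n) (Fin n) ℝ) :
    Matrix (Fin k → Fin n) (Fin k → Fin n) ℝ :=
  Matrix.of fun I J => ∏ t : Fin k, A (I t) (J t)

/-!
Expanding both products entrywise, `(E_β · A^{⊗k})_{IJ}` and `(A^{⊗l} · E_β)_{IJ}` are sums over
colourings of the `l + k` legs that are constant on the blocks of `β`, weighted by one factor per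
leg. Such a sum factors over the blocks, and for a block `{x, y}` the factor is an entry of
`1 · 1ᵀ`, `1 · A` or `Aᵀ · A` on one side and of `A · Aᵀ`, `A · 1` or `1ᵀ · 1` on the other;
these agree exactly because `A` is orthogonal.
-/

open Finset
open scoped Matrix

section PartitionSum

variable {α κ R : Type*} [Fintype α] [DecidableEq α] [Fintype κ] [CommSemiring R]

noncomputable def partitionSum (π : Setoid α) (w : α → κ → R) : R :=
  ∑ v : α → κ, (if ∀ x y, π.r x y → v x = v y then 1 else 0) * ∏ x, w x (v x)

theorem partitionSum_eq_prod_quotient (π : Setoid α) (w : α → κ → R) :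
    partitionSum π w = ∏ c : Quotient π, ∑ a, ∏ x ∈ univ.filter (fun x => ⟦x⟧ = c), w x a :=
  calc partitionSum π w
      = ∑ v ∈ univ.filter (fun v : α → κ => π ≤ Setoid.ker v), ∏ x, w x (v x) := by
        rw [partitionSum, sum_filter]
        simp [Setoid.le_def, Setoid.ker_def]
    _ = ∑ v : {v : α → κ // π ≤ Setoid.ker v}, ∏ x, w x (v.1 x) := sum_subtype _ (by simp) _
    _ = ∑ g : Quotient π → κ, ∏ x, w x (g ⟦x⟧) :=
        ((Setoid.liftEquiv π).symm.sum_comp fun v => ∏ x, w x (v.1 x)).symm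
    _ = ∑ g : Quotient π → κ, ∏ c, ∏ x ∈ univ.filter (fun x => ⟦x⟧ = c), w x (g c) := by
        refine Fintype.sum_congr _ _ fun g => ?_
        rw [← prod_fiberwise univ (fun x => (⟦x⟧ : Quotient π))]
        exact prod_congr rfl fun c _ => prod_congr rfl fun x hx => by rw [(mem_filter.mp hx).2]
    _ = _ := by rw [Fintype.prod_sum]

theorem filter_mk_eq_pair {π : Setoid α} {x y : α} (hxy : π.r x y)
    (hblock : ∀ z, π.r x z → z = x ∨ z = y) :
    univ.filter (fun z => (⟦z⟧ : Quotient π) = ⟦x⟧) = {x, y} := by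
  ext z
  simp only [mem_filter, mem_univ, true_and, mem_insert, mem_singleton, Quotient.eq]
  constructor
  · exact fun hzx => hblock z (π.symm hzx)
  · rintro (rfl | rfl)
    exacts [π.refl z, π.symm hxy]

theorem partitionSum_congr_of_pairs {π : Setoid α}
    (hπ : ∀ x, ∃ y, x ≠ y ∧ π.r x y ∧ ∀ z, π.r x z → z = x ∨ z = y) {w w' : α → κ → R}
    (h : ∀ x y, π.r x y → x ≠ y → ∑ a, w x a * w y a = ∑ a, w' x a * w' y a) :
    partitionSum π w = partitionSum π w' := by
  rw [partitionSum_eq_prod_quotient, partitionSum_eq_prod_quotient]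
  refine prod_congr rfl fun c _ => ?_
  induction c using Quotient.inductionOn with | h x => ?_
  obtain ⟨y, hne, hxy, hblock⟩ := hπ x
  simp only [filter_mk_eq_pair hxy hblock, prod_pair hne]
  exact h x y hxy hne

end PartitionSum

theorem tpowMat_one (n k : ℕ) : tpowMat n k 1 = 1 := by
  ext I J
  simp [tpowMat, Matrix.one_apply, prod_boole, funext_iff]

theorem tpowMat_mul_Emat_mul_tpowMat_apply (n l k : ℕ) (π : Setoid (Fin l ⊕ Fin k))
    (B C : Matrix (Fin n) (Fin n) ℝ) (I : Fin l → Fin n) (J : Fin k → Fin n) :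
    (tpowMat n l B * Emat n l k π * tpowMat n k C) I J
      = partitionSum π (Sum.elim (fun s a => B (I s) a) (fun t a => C a (J t))) := by
  simp only [Matrix.mul_apply, sum_mul, partitionSum, Emat, tpowMat, Matrix.of_apply]
  rw [← (Equiv.sumArrowEquivProdArrow _ _ _).symm.sum_comp, Fintype.sum_prod_type, sum_comm]
  simp [Fintype.prod_sum_type]

theorem tpowMat_mul_Emat_mul_tpowMat_congr {n l k : ℕ} {β : Setoid (Fin l ⊕ Fin k)}
    (hβ : ∀ x, ∃ y, x ≠ y ∧ β.r x y ∧ ∀ z, β.r x z → z = x ∨ z = y)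
    {B C B' C' : Matrix (Fin n) (Fin n) ℝ} (hB : B * Bᵀ = B' * B'ᵀ) (hBC : B * C = B' * C')
    (hC : Cᵀ * C = C'ᵀ * C') :
    tpowMat n l B * Emat n l k β * tpowMat n k C
      = tpowMat n l B' * Emat n l k β * tpowMat n k C' := by
  ext I J
  rw [tpowMat_mul_Emat_mul_tpowMat_apply, tpowMat_mul_Emat_mul_tpowMat_apply]
  refine partitionSum_congr_of_pairs hβ fun x y _ _ => ?_
  rcases x with s | t <;> rcases y with s' | t'
  · simpa [Matrix.mul_apply] using congr_fun₂ hB (I s) (I s')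
  · simpa [Matrix.mul_apply] using congr_fun₂ hBC (I s) (J t')
  · simpa [Matrix.mul_apply, mul_comm] using congr_fun₂ hBC (I s') (J t)
  · simpa [Matrix.mul_apply] using congr_fun₂ hC (J t) (J t')

/-- For the orthogonal group `O(n)` acting diagonally on tensor powers of `ℝⁿ`, the matrix
`E_β` of any perfect matching `β` of `[l+k]` (a `(k,l)`-Brauer diagram, i.e. a set
partition all of whose blocks have size exactly two) is `O(n)`-equivariant. -/
theorem Emat_brauer_orthogonal_equivariant (n l k : ℕ) (β : Setoid (Fin l ⊕ Fin k))
    (hβ : ∀ x, ∃ y, x ≠ y ∧ β.r x y ∧ ∀ z, β.r x z → z = x ∨ z = y)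
    (A : Matrix (Fin n) (Fin n) ℝ) (hA : A ∈ Matrix.orthogonalGroup (Fin n) ℝ) :
    Emat n l k β * tpowMat n k A = tpowMat n l A * Emat n l k β := by
  have hAAt : A * Aᵀ = 1 := (Matrix.mem_orthogonalGroup_iff _ _).mp hA
  have hAtA : Aᵀ * A = 1 := (Matrix.mem_orthogonalGroup_iff' _ _).mp hA
  calc Emat n l k β * tpowMat n k A
      = tpowMat n l 1 * Emat n l k β * tpowMat n k A := by rw [tpowMat_one, Matrix.one_mul]
    _ = tpowMat n l A * Emat n l k β * tpowMat n k 1 :=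
        tpowMat_mul_Emat_mul_tpowMat_congr hβ (by simp [hAAt]) (by simp) (by simp [hAtA])
    _ = tpowMat n l A * Emat n l k β := by rw [tpowMat_one, Matrix.mul_one]
end

section
/- The composition of partition diagram matrices matches diagram composition: for a (k,l)-partition diagram d_{π₁} and an (l,m)-partition diagram d_{π₂}, one has E_{π₂} · E_{π₁} = n^{c(π₂,π₁)} E_{π₂∘π₁}, where π₂∘π₁ is the concatenated set partition and c(π₂,π₁) is the number of connected components removed from the middle row during concatenation. -/
open scoped Classical

/-!
The `(I, J)` entry of `E_{π₂} * E_{π₁}` counts the labellings `K` of the middle row for which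
the labelling `(I, K, J)` of all three rows is constant on the blocks of the stacked partition.
Such labellings are the functions on those blocks with prescribed values on every block that
meets an outer row. They exist iff `(I, J)` is constant on the blocks of `π₂ ∘ π₁`, and then
their values on the `c(π₂, π₁)` blocks lying inside the middle row are free: `n ^ c` choices.
-/

open Function Set

section Extensions

variable {ι Q X : Type*}

theorem card_comp_eq_card_fun_compl_range {o : ι → Q} {v : ι → X} (hv : v.FactorsThrough o) :
    Nat.card {φ : Q → X // φ ∘ o = v} = Nat.card (((range o)ᶜ : Set Q) → X) := by
  refine Nat.card_eq_of_bijective (fun φ q => φ.1 q) ⟨fun φ ψ hφψ => ?_, fun ψ => ?_⟩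
  · ext q
    by_cases hq : q ∈ range o
    · obtain ⟨i, rfl⟩ := hq
      exact (congrFun φ.2 i).trans (congrFun ψ.2 i).symm
    · exact congrFun hφψ ⟨q, hq⟩
  · refine ⟨⟨fun q => if hq : q ∈ range o then v hq.choose else ψ ⟨q, hq⟩, ?_⟩, ?_⟩
    · ext i
      simp only [comp_apply, mem_range_self, dite_true]
      exact hv (Exists.choose_spec (mem_range_self (f := o) i))
    · ext ⟨q, hq⟩
      exact dif_neg hq

end Extensions

section ThreeRows

variable {α β γ X : Type*} (S : Setoid (α ⊕ β ⊕ γ))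

theorem card_middle_labellings (I : α → X) (J : γ → X) :
    Nat.card {K : β → X // S ≤ Setoid.ker (Sum.elim I (Sum.elim K J))} =
      Nat.card {φ : Quotient S → X //
        φ ∘ (Quotient.mk S ∘ Sum.map id Sum.inr) = Sum.elim I J} := by
  refine Nat.card_eq_of_bijective
    (fun K => ⟨Quotient.lift _ K.2, by ext (_ | _) <;> rfl⟩) ⟨fun K K' hKK' => ?_, fun φ => ?_⟩
  · ext y
    exact congrFun (congrArg Subtype.val hKK') ⟦Sum.inr (Sum.inl y)⟧
  · obtain ⟨φ, hφ⟩ := φ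
    have hF :
        Sum.elim I (Sum.elim (φ ∘ Quotient.mk S ∘ Sum.inr ∘ Sum.inl) J) = φ ∘ Quotient.mk S := by
      ext (i | y | j)
      · exact (congrFun hφ (Sum.inl i)).symm
      · rfl
      · exact (congrFun hφ (Sum.inr j)).symm
    refine ⟨⟨_, by rw [hF]; exact fun x y hxy => congrArg φ (Quotient.sound hxy)⟩, ?_⟩
    ext q
    induction q using Quotient.inductionOn
    exact congrFun hF _

theorem mem_compl_range_mk_outer_iff (q : Quotient S) :
    q ∈ (range (Quotient.mk S ∘ Sum.map id Sum.inr))ᶜ ↔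
      ∀ x, Quotient.mk S x = q → ∃ y : β, x = Sum.inr (Sum.inl y) := by
  constructor
  · rintro hq ((i | y | j)) rfl
    · exact absurd ⟨Sum.inl i, rfl⟩ hq
    · exact ⟨y, rfl⟩
    · exact absurd ⟨Sum.inr j, rfl⟩ hq
  · rintro hq ⟨a | a, rfl⟩ <;> simpa using hq _ rfl

end ThreeRows

theorem concatSetoid_le_ker_iff {X : Type*} {m l k : ℕ} {π₂ : Setoid (Fin m ⊕ Fin l)}
    {π₁ : Setoid (Fin l ⊕ Fin k)} {I : Fin m → X} {K : Fin l → X} {J : Fin k → X} :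
    concatSetoid m l k π₂ π₁ ≤ Setoid.ker (Sum.elim I (Sum.elim K J)) ↔
      π₂ ≤ Setoid.ker (Sum.elim I K) ∧ π₁ ≤ Setoid.ker (Sum.elim K J) := by
  refine ⟨fun h => ⟨fun a b hab => ?_, fun a b hab => h (.rel _ _ (.inr ⟨a, b, hab, rfl, rfl⟩))⟩,
    fun ⟨h₂, h₁⟩ => Setoid.eqvGen_le ?_⟩
  · simpa [Setoid.ker_def, Sum.elim_map] using h (.rel _ _ (.inl ⟨a, b, hab, rfl, rfl⟩))
  · rintro _ _ (⟨a, b, hab, rfl, rfl⟩ | ⟨a, b, hab, rfl, rfl⟩)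
    · simpa [Setoid.ker_def, Sum.elim_map] using h₂ hab
    · exact h₁ hab

theorem Emat_apply (n l k : ℕ) (π : Setoid (Fin l ⊕ Fin k)) (I : Fin l → Fin n)
    (J : Fin k → Fin n) :
    Emat n l k π I J = if π ≤ Setoid.ker (Sum.elim I J) then 1 else 0 := by
  simp only [Emat, Matrix.of_apply, Setoid.le_def, Setoid.ker_def]

theorem card_concatSetoid_labellings (n m l k : ℕ) (π₂ : Setoid (Fin m ⊕ Fin l))
    (π₁ : Setoid (Fin l ⊕ Fin k)) (I : Fin m → Fin n) (J : Fin k → Fin n) :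
    Nat.card {K : Fin l → Fin n //
        concatSetoid m l k π₂ π₁ ≤ Setoid.ker (Sum.elim I (Sum.elim K J))} =
      if compDiagram m l k π₂ π₁ ≤ Setoid.ker (Sum.elim I J) then
        n ^ removedCount m l k π₂ π₁ else 0 := by
  rw [card_middle_labellings]
  split_ifs with h
  · have hv : (Sum.elim I J).FactorsThrough
        (Quotient.mk (concatSetoid m l k π₂ π₁) ∘ Sum.map id Sum.inr) :=
      fun _ _ hab => h ((Setoid.comap_rel _ _ _ _).mpr (Quotient.exact hab))
    rw [card_comp_eq_card_fun_compl_range hv, Nat.card_fun,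
      Nat.card_eq_fintype_card (α := Fin n), Fintype.card_fin, removedCount,
      Nat.card_congr (Equiv.subtypeEquivRight (mem_compl_range_mk_outer_iff _))]
  · refine Nat.card_eq_zero.mpr (Or.inl ⟨fun φ => h fun a b hab => ?_⟩)
    calc Sum.elim I J a = φ.1 (Quotient.mk _ (Sum.map id Sum.inr a)) := (congrFun φ.2 a).symm
      _ = φ.1 (Quotient.mk _ (Sum.map id Sum.inr b)) := congrArg φ.1 (Quotient.sound hab)
      _ = Sum.elim I J b := congrFun φ.2 b

/-- Matrix multiplication of the `E` matrices matches diagram composition: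
`E_{π₂} · E_{π₁} = n^{c(π₂,π₁)} E_{π₂ ∘ π₁}`. -/
theorem Emat_mul (n m l k : ℕ) (π₂ : Setoid (Fin m ⊕ Fin l)) (π₁ : Setoid (Fin l ⊕ Fin k)) :
    Emat n m l π₂ * Emat n l k π₁ =
      (n : ℝ) ^ removedCount m l k π₂ π₁ • Emat n m k (compDiagram m l k π₂ π₁) := by
  ext I J
  calc (Emat n m l π₂ * Emat n l k π₁) I J
      = ∑ K, if concatSetoid m l k π₂ π₁ ≤ Setoid.ker (Sum.elim I (Sum.elim K J)) then 1
          else 0 := by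
        simp only [Matrix.mul_apply, Emat_apply, ite_zero_mul_ite_zero, mul_one,
          concatSetoid_le_ker_iff]
    _ = Nat.card {K : Fin l → Fin n //
          concatSetoid m l k π₂ π₁ ≤ Setoid.ker (Sum.elim I (Sum.elim K J))} := by
        rw [Finset.sum_boole, Nat.card_eq_fintype_card, Fintype.card_subtype]
    _ = _ := by
        rw [card_concatSetoid_labellings, Matrix.smul_apply, Emat_apply]
        split_ifs <;> simp
end
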